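/- arXiv:math/0111073 — 3 statements merged into one kernel-verified Lean document; each statement's English description precedes it below -/
import Mathlib

section
/- For a bicategory C and an object X of C, the forgetful pseudofunctor from the slice bicategory C/X to C sends 2-products in C/X to 2-pullbacks (bipullbacks) over X in C. Precisely, if (W, f) with projections to (Y, g) and (Z, h) is a 2-product of (Y, g) and (Z, h) in C/X, then W together with the induced maps to Y and Z and the induced 2-cell is a bipullback of g : Y → X and h : Z → X in C. -/
/-!
STATEMENT 1: Let `C` be a bicategory and `X` an object.  The forgetful
pseudofunctor `C/X → C` sends 2-products in the slice bicategory `C/X` to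
bipullbacks over `X` in `C`.  Everything is stated in unfolded form: an object
of `C/X` is a 1-morphism to `X`, a 1-morphism `(Y,g) → (Z,h)` is a pair
`(φ, α : φ ≫ h ≅ g)`, and a 2-morphism `(φ,α) → (ψ,β)` is a 2-cell `η : φ ⟶ ψ`
with `(η ▷ h) ≫ β = α`.  The hypothesis says `(W, f)` with projections
`(p, pα)` to `(Y, g)` and `(q, qβ)` to `(Z, h)` is a 2-product in `C/X`
(existence of factorizations and uniqueness up to a unique compatible
2-isomorphism); the conclusion says that `W`, `p`, `q` with the induced 2-cell
`pα ≫ qβ⁻¹ : p ≫ g ≅ q ≫ h` is a bipullback of `g` and `h` in `C`.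
-/

open CategoryTheory CategoryTheory.Bicategory

universe w v u

theorem slice_two_product_is_bipullback
    {C : Type u} [Bicategory.{w, v} C] {X Y Z W : C}
    (g : Y ⟶ X) (h : Z ⟶ X) (f : W ⟶ X)
    (p : W ⟶ Y) (q : W ⟶ Z) (pα : p ≫ g ≅ f) (qβ : q ≫ h ≅ f)
    -- `(W,f)` with projections `(p,pα)`, `(q,qβ)` is a 2-product in `C/X` :
    (hexists : ∀ (T : C) (t : T ⟶ X) (u : T ⟶ Y) (uα : u ≫ g ≅ t)
      (v : T ⟶ Z) (vβ : v ≫ h ≅ t),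
      ∃ (φ : T ⟶ W) (ζ : φ ≫ f ≅ t) (η : φ ≫ p ≅ u) (κ : φ ≫ q ≅ v),
        ((η.hom ▷ g) ≫ uα.hom = (α_ φ p g).hom ≫ (φ ◁ pα.hom) ≫ ζ.hom) ∧
        ((κ.hom ▷ h) ≫ vβ.hom = (α_ φ q h).hom ≫ (φ ◁ qβ.hom) ≫ ζ.hom))
    (huniq : ∀ (T : C) (t : T ⟶ X) (u : T ⟶ Y) (uα : u ≫ g ≅ t)
      (v : T ⟶ Z) (vβ : v ≫ h ≅ t)
      (φ φ' : T ⟶ W) (ζ : φ ≫ f ≅ t) (ζ' : φ' ≫ f ≅ t)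
      (η : φ ≫ p ≅ u) (η' : φ' ≫ p ≅ u) (κ : φ ≫ q ≅ v) (κ' : φ' ≫ q ≅ v),
      ((η.hom ▷ g) ≫ uα.hom = (α_ φ p g).hom ≫ (φ ◁ pα.hom) ≫ ζ.hom) →
      ((κ.hom ▷ h) ≫ vβ.hom = (α_ φ q h).hom ≫ (φ ◁ qβ.hom) ≫ ζ.hom) →
      ((η'.hom ▷ g) ≫ uα.hom = (α_ φ' p g).hom ≫ (φ' ◁ pα.hom) ≫ ζ'.hom) →
      ((κ'.hom ▷ h) ≫ vβ.hom = (α_ φ' q h).hom ≫ (φ' ◁ qβ.hom) ≫ ζ'.hom) →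
      ∃! θ : φ ≅ φ',
        ((θ.hom ▷ f) ≫ ζ'.hom = ζ.hom) ∧
        ((θ.hom ▷ p) ≫ η'.hom = η.hom) ∧
        ((θ.hom ▷ q) ≫ κ'.hom = κ.hom)) :
    -- `(W, p, q, pα ≫ qβ⁻¹)` is a bipullback of `g` and `h` in `C` :
    (∀ (T : C) (u : T ⟶ Y) (v : T ⟶ Z) (θ : u ≫ g ≅ v ≫ h),
      ∃ (φ : T ⟶ W) (η : φ ≫ p ≅ u) (κ : φ ≫ q ≅ v),
        (η.hom ▷ g) ≫ θ.hom =
          (α_ φ p g).hom ≫ (φ ◁ (pα.hom ≫ qβ.inv)) ≫ (α_ φ q h).inv ≫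
            (κ.hom ▷ h)) ∧
    (∀ (T : C) (u : T ⟶ Y) (v : T ⟶ Z) (θ : u ≫ g ≅ v ≫ h)
      (φ φ' : T ⟶ W) (η : φ ≫ p ≅ u) (η' : φ' ≫ p ≅ u)
      (κ : φ ≫ q ≅ v) (κ' : φ' ≫ q ≅ v),
      ((η.hom ▷ g) ≫ θ.hom =
        (α_ φ p g).hom ≫ (φ ◁ (pα.hom ≫ qβ.inv)) ≫ (α_ φ q h).inv ≫
          (κ.hom ▷ h)) →
      ((η'.hom ▷ g) ≫ θ.hom =
        (α_ φ' p g).hom ≫ (φ' ◁ (pα.hom ≫ qβ.inv)) ≫ (α_ φ' q h).inv ≫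
          (κ'.hom ▷ h)) →
      ∃! δ : φ ≅ φ',
        ((δ.hom ▷ p) ≫ η'.hom = η.hom) ∧ ((δ.hom ▷ q) ≫ κ'.hom = κ.hom)) := by
  
  constructor
  · intro T u v θ
    obtain ⟨φ, ζ, η, κ, h1, h2⟩ := hexists T (u ≫ g) u (Iso.refl _) v θ.symm
    refine ⟨φ, η, κ, ?_⟩
    have hk : κ.hom ▷ h = ((α_ φ q h).hom ≫ (φ ◁ qβ.hom) ≫ ζ.hom) ≫ θ.hom := by
      rw [← h2]; simp
    have hg : η.hom ▷ g = (α_ φ p g).hom ≫ (φ ◁ pα.hom) ≫ ζ.hom := by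
      simpa using h1
    rw [hg, hk]
    simp [Bicategory.whiskerLeft_comp]
  · intro T u v θ φ φ' η η' κ κ' e e'
    have key : ∀ (ψ : T ⟶ W) (η₀ : ψ ≫ p ≅ u) (κ₀ : ψ ≫ q ≅ v),
        ((η₀.hom ▷ g) ≫ θ.hom =
          (α_ ψ p g).hom ≫ (ψ ◁ (pα.hom ≫ qβ.inv)) ≫ (α_ ψ q h).inv ≫
            (κ₀.hom ▷ h)) →
        (κ₀.hom ▷ h) ≫ θ.symm.hom =
          (α_ ψ q h).hom ≫ (ψ ◁ qβ.hom) ≫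
            (whiskerLeftIso ψ pα.symm ≪≫ (α_ ψ p g).symm ≪≫
              whiskerRightIso η₀ g).hom := by
      intro ψ η₀ κ₀ e₀
      have : κ₀.hom ▷ h =
          (α_ ψ q h).hom ≫ (ψ ◁ qβ.hom) ≫ (ψ ◁ pα.inv) ≫ (α_ ψ p g).inv ≫
            (η₀.hom ▷ g) ≫ θ.hom := by
        rw [e₀]; simp [Bicategory.whiskerLeft_comp]
      rw [this]; simp
    have c1 := key φ η κ e
    have c1' := key φ' η' κ' e'
    have c0 : ∀ (ψ : T ⟶ W) (η₀ : ψ ≫ p ≅ u),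
        (η₀.hom ▷ g) ≫ (Iso.refl (u ≫ g)).hom =
          (α_ ψ p g).hom ≫ (ψ ◁ pα.hom) ≫
            (whiskerLeftIso ψ pα.symm ≪≫ (α_ ψ p g).symm ≪≫
              whiskerRightIso η₀ g).hom := by
      intro ψ η₀; simp
    obtain ⟨δ, ⟨hδ1, hδ2, hδ3⟩, hu⟩ := huniq T (u ≫ g) u (Iso.refl _) v θ.symm
      φ φ' _ _ η η' κ κ' (c0 φ η) c1 (c0 φ' η') c1'
    refine ⟨δ, ⟨hδ2, hδ3⟩, ?_⟩
    intro δ' ⟨hd2, hd3⟩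
    apply hu
    refine ⟨?_, hd2, hd3⟩
    -- need: δ'.hom ▷ f ≫ ζ' = ζ where ζ built from η', η
    simp only [Iso.trans_hom, whiskerLeftIso_hom, Iso.symm_hom, whiskerRightIso_hom]
    rw [← hd2, comp_whiskerRight]
    calc (δ'.hom ▷ f) ≫ (φ' ◁ pα.inv) ≫ (α_ φ' p g).inv ≫ (η'.hom ▷ g)
        = ((φ ◁ pα.inv) ≫ (δ'.hom ▷ (p ≫ g))) ≫ (α_ φ' p g).inv ≫ (η'.hom ▷ g) := by
          rw [whisker_exchange]; simp
      _ = (φ ◁ pα.inv) ≫ (α_ φ p g).inv ≫ ((δ'.hom ▷ p) ▷ g) ≫ (η'.hom ▷ g) := by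
          rw [Category.assoc, ← Category.assoc (δ'.hom ▷ (p ≫ g)),
            associator_inv_naturality_left]; simp
end

section
/- Let A, B, C be groupoids and a : C → A, b : C → B functors that are bijective on objects. Then the pushout A *_C B of a and b in the category of groupoids is also a 2-pushout (bicolimit pushout) in the 2-category of groupoids: for every groupoid D, every pair of functors f : A → D, g : B → D, and every natural isomorphism α : g ∘ b ≅ f ∘ a, there exists a functor h : A *_C B → D together with natural isomorphisms h ∘ i_A ≅ f and h ∘ i_B ≅ g compatible with α, and h is unique up to a unique natural isomorphism compatible with these data. -/
open CategoryTheory Functor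

universe u v w w'

/-!
Since `b` is bijective on objects, so is `iA`: probing `P` with codiscrete groupoids shows
that its objects form the pushout of the object sets. Given `α`, transporting `g` along `α`
gives a functor `g'` with `b ⋙ g' = a ⋙ f` on the nose, and `h` is the functor induced by `f`
and `g'`. Conversely, transporting any compatible `h'` along `ηA'` (possible as `iA` is
bijective on objects) gives a functor restricting to exactly `f` and `g'`, hence equal to `h`.
A natural isomorphism out of `P` is determined by its restriction along `iA`, as `iA` is
surjective on objects.
-/

section Strictification

variable {X Y D : Type*} [Category X] [Category Y] [Category D]

lemma exists_comp_eq_of_iso_of_bijective_obj {u : X ⥤ Y} (hu : Function.Bijective u.obj)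
    (F : Y ⥤ D) {K : X ⥤ D} (θ : u ⋙ F ≅ K) :
    ∃ (F' : Y ⥤ D) (ε : F ≅ F') (hF' : u ⋙ F' = K),
      isoWhiskerLeft u ε ≪≫ eqToIso hF' = θ := by
  let e := Equiv.ofBijective u.obj hu
  let ε := F.isoCopyObj (K.obj ∘ e.symm)
    (fun y => eqToIso (congrArg F.obj (e.apply_symm_apply y)).symm ≪≫ θ.app (e.symm y))
  have hεθ (x : X) : ε.hom.app (u.obj x) = θ.hom.app x ≫ eqToHom (by simp [e]) :=
    (eqToHom_naturality (fun x => θ.hom.app x) (e.symm_apply_apply x).symm).symm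
  have hF' : u ⋙ F.copyObj _ _ = K :=
    Functor.ext_of_iso ((isoWhiskerLeft u ε).symm ≪≫ θ) (fun x => by simp [e])
      (fun x => by
        simp only [Iso.trans_hom, Iso.symm_hom, NatTrans.comp_app, isoWhiskerLeft_inv,
          whiskerLeft_app]
        rw [← Iso.app_inv, Iso.inv_comp_eq, Iso.app_hom, hεθ]
        simp)
  exact ⟨_, ε, hF', by ext x; simp [hεθ, eqToHom_app]⟩

lemma eq_eqToIso_of_isoWhiskerLeft_eq_eqToIso {u : X ⥤ Y} (hu : Function.Surjective u.obj)
    {G₁ G₂ : Y ⥤ D} (ρ : G₁ ≅ G₂) (h : u ⋙ G₁ = u ⋙ G₂)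
    (hρ : isoWhiskerLeft u ρ = eqToIso h) :
    ∃ hG : G₁ = G₂, ρ = eqToIso hG := by
  have hobj (y : Y) : G₁.obj y = G₂.obj y := by
    obtain ⟨x, rfl⟩ := hu y
    exact Functor.congr_obj h x
  have happ (y : Y) : ρ.hom.app y = eqToHom (hobj y) := by
    obtain ⟨x, rfl⟩ := hu y
    simpa [eqToHom_app] using congrArg (fun ρ => ρ.hom.app x) hρ
  refine ⟨Functor.ext_of_iso ρ hobj happ, ?_⟩
  ext y
  simp [happ, eqToHom_app]

lemma isoWhiskerLeft_injective {u : X ⥤ Y} (hu : Function.Surjective u.obj) {G H : Y ⥤ D} :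
    Function.Injective (isoWhiskerLeft u : (G ≅ H) → (u ⋙ G ≅ u ⋙ H)) := by
  intro δ₁ δ₂ h
  ext y
  obtain ⟨x, rfl⟩ := hu y
  exact congrArg (fun δ => δ.hom.app x) h

end Strictification

-- Functors into codiscrete groupoids are functions on objects, so probing a strict pushout with
-- them describes its objects. Homs are lifted to `Type w'` to match `IsStrictPushout.{w, w'}`.
instance (T : Type*) : Groupoid.{w'} (ULiftHom.{w'} (Codiscrete T)) where
  inv _ := ⟨()⟩

section

variable {X : Type*} [Category X] {T : Type*}

def codiscreteFunctor (φ : X → T) : X ⥤ ULiftHom.{w'} (Codiscrete T) :=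
  Codiscrete.functor φ ⋙ ULiftHom.up

lemma codiscreteFunctor_injective :
    Function.Injective (codiscreteFunctor : (X → T) → X ⥤ ULiftHom.{w'} (Codiscrete T)) :=
  fun _ _ h => funext fun x => congrArg Codiscrete.as (Functor.congr_obj h x)

lemma comp_codiscreteFunctor {W : Type*} [Category W] (u : W ⥤ X) (φ : X → T) :
    u ⋙ (codiscreteFunctor φ : X ⥤ ULiftHom.{w'} (Codiscrete T)) =
      codiscreteFunctor (φ ∘ u.obj) :=
  rfl

end

section StrictPushout

variable {A B C P : Type*} [Category A] [Category B] [Category C] [Category P]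

def IsStrictPushout (a : C ⥤ A) (b : C ⥤ B) (iA : A ⥤ P) (iB : B ⥤ P) : Prop :=
  ∀ {D : Type w} [Groupoid.{w'} D] (f : A ⥤ D) (g : B ⥤ D),
    a ⋙ f = b ⋙ g → ∃! h : P ⥤ D, iA ⋙ h = f ∧ iB ⋙ h = g

namespace IsStrictPushout

variable {a : C ⥤ A} {b : C ⥤ B} {iA : A ⥤ P} {iB : B ⥤ P}

lemma exists_desc_obj (hpush : IsStrictPushout.{w, w'} a b iA iB) {T : Type w}
    (φ : A → T) (ψ : B → T) (hφψ : ∀ c, φ (a.obj c) = ψ (b.obj c)) :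
    ∃ χ : P → T, (∀ x, χ (iA.obj x) = φ x) ∧ ∀ y, χ (iB.obj y) = ψ y := by
  obtain ⟨h, ⟨hA, hB⟩, -⟩ := hpush (D := ULiftHom.{w'} (Codiscrete T))
    (codiscreteFunctor φ) (codiscreteFunctor ψ)
    (by simp only [comp_codiscreteFunctor, Function.comp_def, hφψ])
  exact ⟨fun p => (h.obj p).as, fun x => congrArg Codiscrete.as (Functor.congr_obj hA x),
    fun y => congrArg Codiscrete.as (Functor.congr_obj hB y)⟩

lemma obj_ext (hpush : IsStrictPushout.{w, w'} a b iA iB)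
    (hcomm : ∀ c, iA.obj (a.obj c) = iB.obj (b.obj c)) {T : Type w} {χ χ' : P → T}
    (hA : ∀ x, χ (iA.obj x) = χ' (iA.obj x)) (hB : ∀ y, χ (iB.obj y) = χ' (iB.obj y)) :
    χ = χ' := by
  obtain ⟨h, -, huniq⟩ := hpush (D := ULiftHom.{w'} (Codiscrete T))
    (codiscreteFunctor (χ ∘ iA.obj)) (codiscreteFunctor (χ ∘ iB.obj))
    (by simp only [comp_codiscreteFunctor, Function.comp_def, hcomm])
  refine codiscreteFunctor_injective ((huniq _ ⟨rfl, rfl⟩).trans (huniq _ ⟨?_, ?_⟩).symm)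
  · exact congrArg codiscreteFunctor (funext hA).symm
  · exact congrArg codiscreteFunctor (funext hB).symm

lemma injective_obj (hpush : IsStrictPushout.{w, w'} a b iA iB) (hb : Function.Injective b.obj) :
    Function.Injective iA.obj := by
  intro x₀ x h
  obtain ⟨χ, hχA, -⟩ := hpush.exists_desc_obj (T := ULift.{w} Prop) (fun x' => ⟨x' = x⟩)
    (fun y => ⟨∃ c, b.obj c = y ∧ a.obj c = x⟩)
    (fun c => congrArg ULift.up (propext ⟨fun hc => ⟨c, rfl, hc⟩,
      fun ⟨c', hc', hc'x⟩ => hb hc' ▸ hc'x⟩))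
  have := congrArg ULift.down ((hχA x₀).symm.trans ((congrArg χ h).trans (hχA x)))
  exact of_eq_true (this.trans (eq_self x))

lemma surjective_obj (hpush : IsStrictPushout.{w, w'} a b iA iB)
    (hcomm : ∀ c, iA.obj (a.obj c) = iB.obj (b.obj c)) (hb : Function.Surjective b.obj) :
    Function.Surjective iA.obj := by
  have hB (y : B) : (⟨∃ x, iA.obj x = iB.obj y⟩ : ULift.{w} Prop) = ⟨True⟩ := by
    obtain ⟨c, rfl⟩ := hb y
    exact congrArg ULift.up (eq_true ⟨a.obj c, hcomm c⟩)
  have hχ := hpush.obj_ext hcomm (χ := fun p => (⟨∃ x, iA.obj x = p⟩ : ULift.{w} Prop))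
    (χ' := fun _ => ⟨True⟩) (fun x => congrArg ULift.up (eq_true ⟨x, rfl⟩)) hB
  exact fun p => of_eq_true (congrArg ULift.down (congrFun hχ p))

lemma bijective_obj (hpush : IsStrictPushout.{w, w'} a b iA iB)
    (hcomm : ∀ c, iA.obj (a.obj c) = iB.obj (b.obj c)) (hb : Function.Bijective b.obj) :
    Function.Bijective iA.obj :=
  ⟨hpush.injective_obj hb.1, hpush.surjective_obj hcomm hb.2⟩

end IsStrictPushout

end StrictPushout

theorem pushout_of_bijOnObj_is_bipushout
    {A B C P : Type u} [Groupoid.{v} A] [Groupoid.{v} B] [Groupoid.{v} C]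
    [Groupoid.{v} P]
    (a : C ⥤ A) (b : C ⥤ B) (iA : A ⥤ P) (iB : B ⥤ P)
    (hb : Function.Bijective b.obj)
    (hcomm : a ⋙ iA = b ⋙ iB)
    (hpush : ∀ {D : Type w} [Groupoid.{w'} D] (f : A ⥤ D) (g : B ⥤ D),
      a ⋙ f = b ⋙ g → ∃! h : P ⥤ D, iA ⋙ h = f ∧ iB ⋙ h = g) :
    ∀ {D : Type w} [Groupoid.{w'} D] (f : A ⥤ D) (g : B ⥤ D)
      (α : b ⋙ g ≅ a ⋙ f),
      ∃ (h : P ⥤ D) (ηA : iA ⋙ h ≅ f) (ηB : iB ⋙ h ≅ g),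
        (Functor.isoWhiskerLeft b ηB ≪≫ α =
          eqToIso (by rw [← Functor.assoc, ← hcomm, Functor.assoc]) ≪≫
            Functor.isoWhiskerLeft a ηA) ∧
        ∀ (h' : P ⥤ D) (ηA' : iA ⋙ h' ≅ f) (ηB' : iB ⋙ h' ≅ g),
          (Functor.isoWhiskerLeft b ηB' ≪≫ α =
            eqToIso (by rw [← Functor.assoc, ← hcomm, Functor.assoc]) ≪≫
              Functor.isoWhiskerLeft a ηA') →
          ∃! δ : h ≅ h',
            Functor.isoWhiskerLeft iA δ ≪≫ ηA' = ηA ∧ Functor.isoWhiskerLeft iB δ ≪≫ ηB' = ηB := by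
  intro D _ f g α
  have hcomm_obj : ∀ c, iA.obj (a.obj c) = iB.obj (b.obj c) := Functor.congr_obj hcomm
  have hiA := IsStrictPushout.bijective_obj hpush hcomm_obj hb
  obtain ⟨g', εg, hg', hεg⟩ := exists_comp_eq_of_iso_of_bijective_obj hb g α
  obtain ⟨h, ⟨hA, hB⟩, huniq⟩ := hpush f g' hg'.symm
  refine ⟨h, eqToIso hA, eqToIso hB ≪≫ εg.symm, ?_, fun h' ηA' ηB' hα' => ?_⟩
  · rw [← hεg]; ext c; simp [eqToHom_app]
  obtain ⟨h'', ε, hA'', hε⟩ := exists_comp_eq_of_iso_of_bijective_obj hiA h' ηA'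
  have hbρ : isoWhiskerLeft b ((isoWhiskerLeft iB ε).symm ≪≫ ηB' ≪≫ εg) =
      eqToIso (by rw [← Functor.assoc, ← hcomm, Functor.assoc, hA'', hg']) := by
    ext c
    have hα'c := congrArg (fun i => i.hom.app c) hα'
    have hεc := congrArg (fun i => i.hom.app (a.obj c)) hε
    have hεgc := congrArg (fun i => i.hom.app c) hεg
    simp [eqToHom_app] at hα'c hεc hεgc ⊢
    rw [(comp_eqToHom_iff _ _ _).1 hεgc, reassoc_of% hα'c, ← hεc,
      NatTrans.congr ε.hom (hcomm_obj c)]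
    simp [eqToHom_map]
  obtain ⟨hB'', hρ⟩ := eq_eqToIso_of_isoWhiskerLeft_eq_eqToIso hb.2 _ _ hbρ
  obtain rfl : h'' = h := huniq h'' ⟨hA'', hB''⟩
  have hεA : isoWhiskerLeft iA ε.symm ≪≫ ηA' = eqToIso hA'' := by rw [← hε]; ext x; simp
  refine ⟨ε.symm, ⟨hεA, ?_⟩, fun δ hδ => isoWhiskerLeft_injective hiA.2 ?_⟩
  · apply Iso.ext
    rw [← Iso.cancel_iso_hom_right _ _ εg]
    simpa using congrArg Iso.hom hρ
  · exact Iso.ext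
      ((Iso.cancel_iso_hom_right _ _ ηA').1 (congrArg Iso.hom (hδ.1.trans hεA.symm)))
end

section
/- Let A, B, C be groupoids, a : C → A and b : C → B functors bijective on objects, and D a groupoid. Given a square consisting of f : A → D, g : B → D and a natural isomorphism α : g ∘ b ≅ f ∘ a, there exists a functor h : A *_C B → D with h ∘ i_A = f (strictly, on a suitable presentation) and a natural isomorphism β : g ≅ h ∘ i_B such that the whiskered compatibility β ∘ b = (identity on h∘i_A∘a) ∘ α⁻¹ holds; i.e., every pseudo-commutative cocone over the span can be rectified to one where the A-leg commutes strictly. -/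
/-!
Because `b` is bijective on objects, `g` is isomorphic to a functor `g'` that agrees with
`a ⋙ f` on the nose after precomposition with `b`: on objects `g' x := f (a (b⁻¹ x))`, on
morphisms `g'` is `g` conjugated by the components of `α` at `b⁻¹ x`. The square with `f` and
`g'` commutes strictly, so the universal property of the pushout gives `h` with `iA ⋙ h = f`
and `iB ⋙ h = g'`.
-/

open CategoryTheory

universe u v w w'

namespace CategoryTheory.Functor

variable {B C D : Type*} [Category B] [Category C] [Category D]

theorem eq_eqToIso_of_app_eq_eqToHom {F G : C ⥤ D} (e : F ≅ G) (h : F = G)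
    (happ : ∀ X, e.hom.app X = eqToHom (congr_obj h X)) : e = eqToIso h := by
  ext X
  simp [happ]

theorem exists_iso_whiskerLeft_trans_eqToIso_eq_of_bijective_obj (b : C ⥤ B)
    (hb : Function.Bijective b.obj) (g : B ⥤ D) (k : C ⥤ D) (α : b ⋙ g ≅ k) :
    ∃ (g' : B ⥤ D) (β : g ≅ g') (e : b ⋙ g' = k), isoWhiskerLeft b β ≪≫ eqToIso e = α := by
  let s := Equiv.ofBijective b.obj hb
  let comp x : g.obj x ≅ k.obj (s.symm x) :=
    eqToIso (congrArg g.obj (s.apply_symm_apply x).symm) ≪≫ α.app (s.symm x)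
  let β := g.isoCopyObj _ comp
  have hβ c : (isoWhiskerLeft b β).app c = α.app c ≪≫ eqToIso (by simp [s]) :=
    Iso.ext (eqToHom_naturality (fun c => α.hom.app c) (s.symm_apply_apply c).symm).symm
  let ε := (isoWhiskerLeft b β).symm ≪≫ α
  have hε c : ε.hom.app c = eqToHom (by simp [s]) := by
    rw [Iso.trans_hom, NatTrans.comp_app, Iso.symm_hom, ← Iso.app_inv, hβ]
    simp
  have e : b ⋙ g.copyObj _ comp = k := ext_of_iso ε (fun c => by simp [s]) hε
  refine ⟨g.copyObj _ comp, β, e, ?_⟩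
  rw [← eq_eqToIso_of_app_eq_eqToHom ε e hε, Iso.self_symm_id_assoc]

end CategoryTheory.Functor

theorem pushout_cocone_rectification_general
    {A B C P : Type u} [Groupoid.{v} A] [Groupoid.{v} B] [Groupoid.{v} C]
    [Groupoid.{v} P]
    (a : C ⥤ A) (b : C ⥤ B) (iA : A ⥤ P) (iB : B ⥤ P)
    (hb : Function.Bijective b.obj)
    (hpush : ∀ {D : Type w} [Groupoid.{w'} D] (f : A ⥤ D) (g : B ⥤ D),
      a ⋙ f = b ⋙ g → ∃! h : P ⥤ D, iA ⋙ h = f ∧ iB ⋙ h = g)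
    {D : Type w} [Groupoid.{w'} D] (f : A ⥤ D) (g : B ⥤ D)
    (α : b ⋙ g ≅ a ⋙ f) :
    ∃ h : P ⥤ D, iA ⋙ h = f ∧
      ∃ (β : g ≅ iB ⋙ h) (e : b ⋙ (iB ⋙ h) = a ⋙ f),
        Functor.isoWhiskerLeft b β ≪≫ eqToIso e = α := by
  obtain ⟨g', β, e, hβ⟩ :=
    b.exists_iso_whiskerLeft_trans_eqToIso_eq_of_bijective_obj hb g (a ⋙ f) α
  obtain ⟨h, ⟨hf, rfl⟩, -⟩ := hpush f g' e.symm
  exact ⟨h, hf, β, e, hβ⟩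

theorem pushout_cocone_rectification
    {A B C P : Type u} [Groupoid.{v} A] [Groupoid.{v} B] [Groupoid.{v} C]
    [Groupoid.{v} P]
    (a : C ⥤ A) (b : C ⥤ B) (iA : A ⥤ P) (iB : B ⥤ P)
    (ha : Function.Bijective a.obj) (hb : Function.Bijective b.obj)
    (hcomm : a ⋙ iA = b ⋙ iB)
    (hpush : ∀ {D : Type w} [Groupoid.{w'} D] (f : A ⥤ D) (g : B ⥤ D),
      a ⋙ f = b ⋙ g → ∃! h : P ⥤ D, iA ⋙ h = f ∧ iB ⋙ h = g)
    {D : Type w} [Groupoid.{w'} D] (f : A ⥤ D) (g : B ⥤ D)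
    (α : b ⋙ g ≅ a ⋙ f) :
    ∃ h : P ⥤ D, iA ⋙ h = f ∧
      ∃ (β : g ≅ iB ⋙ h) (e : b ⋙ (iB ⋙ h) = a ⋙ f),
        Functor.isoWhiskerLeft b β ≪≫ eqToIso e = α :=
  pushout_cocone_rectification_general a b iA iB hb hpush f g α
end
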